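/- Let a = t_0 ≤ t_1 ≤ ... ≤ t_N ≤ t_{N+1} = b be real numbers, and let f:[a,b] → ℂ be continuously differentiable with f(t_n) = 0 for all n = 1,...,N and f(a) = f(b) = 0. If t_{n+1} − t_n ≤ δ for all n = 0,...,N, then ∫_a^b |f(t)|² dt ≤ (δ/π)² ∫_a^b |f′(t)|² dt. -/

import Mathlib

open MeasureTheory intervalIntegral Real Set Topology

/-!
For `0 ≤ k < π / (d - c)` the function `ψ x = k tan (k (x - (c + d) / 2))` is smooth on `[c, d]`
and solves the Riccati equation `ψ' = ψ² + k²`. Hence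
`k² ‖f‖² + ‖f' + ψ f‖² = ‖f'‖² + (ψ ‖f‖²)'`, and integrating over `[c, d]`, where the boundary
term vanishes since `f c = f d = 0`, gives `k² ∫ ‖f‖² ≤ ∫ ‖f'‖²`. Letting `k → π / (d - c)` yields
Wirtinger's inequality on one interval; summing it over the intervals of the partition gives
the theorem.
-/

lemma hasDerivAt_mul_tan_mul_sub {k m x : ℝ} (hcos : cos (k * (x - m)) ≠ 0) :
    HasDerivAt (fun y => k * tan (k * (y - m))) ((k * tan (k * (x - m))) ^ 2 + k ^ 2) x := by
  have hinner : HasDerivAt (fun y => k * (y - m)) k x := by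
    simpa using ((hasDerivAt_id x).sub_const m).const_mul k
  refine (((hasDerivAt_tan hcos).comp x hinner).const_mul k).congr_deriv ?_
  rw [tan_eq_sin_div_cos]
  field_simp
  linear_combination (-k ^ 2) * sin_sq_add_cos_sq (k * (x - m))

section InnerProductSpace

variable {E : Type*} [NormedAddCommGroup E] [InnerProductSpace ℝ E]

lemma sq_mul_norm_sq_le_of_riccati {k ψ ψ' : ℝ} (hψ' : ψ' = ψ ^ 2 + k ^ 2) (u v : E) :
    k ^ 2 * ‖u‖ ^ 2 ≤ ‖v‖ ^ 2 + (ψ' * ‖u‖ ^ 2 + ψ * (2 * inner ℝ u v)) := by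
  have hsq : ‖v + ψ • u‖ ^ 2 = ‖v‖ ^ 2 + 2 * ψ * inner ℝ u v + ψ ^ 2 * ‖u‖ ^ 2 := by
    rw [norm_add_sq_real, inner_smul_right, real_inner_comm, norm_smul, mul_pow,
      Real.norm_eq_abs, sq_abs]
    ring
  nlinarith [sq_nonneg ‖v + ψ • u‖]

lemma sq_mul_integral_norm_sq_le_of_mul_lt_pi {f f' : ℝ → E} {c d k : ℝ} (hcd : c ≤ d)
    (hk : 0 ≤ k) (hkπ : k * (d - c) < π) (hderiv : ∀ x ∈ Icc c d, HasDerivAt f (f' x) x)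
    (hcont : ContinuousOn f' (Icc c d)) (hc : f c = 0) (hd : f d = 0) :
    k ^ 2 * ∫ x in c..d, ‖f x‖ ^ 2 ≤ ∫ x in c..d, ‖f' x‖ ^ 2 := by
  set ψ : ℝ → ℝ := fun y => k * tan (k * (y - (c + d) / 2))
  set g' : ℝ → ℝ := fun x =>
    (ψ x ^ 2 + k ^ 2) * ‖f x‖ ^ 2 + ψ x * (2 * inner ℝ (f x) (f' x))
  have hcos : ∀ x ∈ Icc c d, cos (k * (x - (c + d) / 2)) ≠ 0 := fun x hx => by
    refine (cos_pos_of_mem_Ioo ⟨?_, ?_⟩).ne' <;>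
      nlinarith [mul_nonneg hk (sub_nonneg.2 hx.1), mul_nonneg hk (sub_nonneg.2 hx.2)]
  have hψ : ∀ x ∈ Icc c d, HasDerivAt ψ (ψ x ^ 2 + k ^ 2) x := fun x hx =>
    hasDerivAt_mul_tan_mul_sub (hcos x hx)
  have hg' : ∀ x ∈ uIcc c d, HasDerivAt (fun y => ψ y * ‖f y‖ ^ 2) (g' x) x := by
    rw [uIcc_of_le hcd]
    exact fun x hx => (hψ x hx).mul (hderiv x hx).norm_sq
  have hψc : ContinuousOn ψ (Icc c d) := fun x hx => (hψ x hx).continuousAt.continuousWithinAt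
  have hfc : ContinuousOn f (Icc c d) := fun x hx =>
    (hderiv x hx).continuousAt.continuousWithinAt
  have hg'int : IntervalIntegrable g' volume c d :=
    ContinuousOn.intervalIntegrable_of_Icc hcd (by fun_prop)
  have hg'zero : ∫ x in c..d, g' x = 0 := by
    rw [integral_eq_sub_of_hasDerivAt hg' hg'int]
    simp [hc, hd]
  have hf'int : IntervalIntegrable (fun x => ‖f' x‖ ^ 2) volume c d :=
    ContinuousOn.intervalIntegrable_of_Icc hcd (by fun_prop)
  calc k ^ 2 * ∫ x in c..d, ‖f x‖ ^ 2 = ∫ x in c..d, k ^ 2 * ‖f x‖ ^ 2 :=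
        (intervalIntegral.integral_const_mul _ _).symm
    _ ≤ ∫ x in c..d, (‖f' x‖ ^ 2 + g' x) :=
        integral_mono_on hcd (ContinuousOn.intervalIntegrable_of_Icc hcd (by fun_prop))
          (hf'int.add hg'int) fun x _ => sq_mul_norm_sq_le_of_riccati rfl _ _
    _ = ∫ x in c..d, ‖f' x‖ ^ 2 := by rw [integral_add hf'int hg'int, hg'zero, add_zero]

theorem wirtinger_inequality {f f' : ℝ → E} {c d : ℝ} (hcd : c ≤ d)
    (hderiv : ∀ x ∈ Icc c d, HasDerivAt f (f' x) x) (hcont : ContinuousOn f' (Icc c d))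
    (hc : f c = 0) (hd : f d = 0) :
    ∫ x in c..d, ‖f x‖ ^ 2 ≤ ((d - c) / π) ^ 2 * ∫ x in c..d, ‖f' x‖ ^ 2 := by
  rcases hcd.eq_or_lt with rfl | hlt
  · simp
  have hL : 0 < d - c := sub_pos.2 hlt
  set K := π / (d - c)
  have hK : 0 < K := div_pos pi_pos hL
  have hsharp : K ^ 2 * ∫ x in c..d, ‖f x‖ ^ 2 ≤ ∫ x in c..d, ‖f' x‖ ^ 2 := by
    refine le_of_tendsto (x := 𝓝[<] K)
      ((continuous_pow 2).mul continuous_const).continuousWithinAt ?_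
    filter_upwards [Ioo_mem_nhdsLT hK] with k hk
    exact sq_mul_integral_norm_sq_le_of_mul_lt_pi hcd hk.1.le ((lt_div_iff₀ hL).1 hk.2)
      hderiv hcont hc hd
  calc ∫ x in c..d, ‖f x‖ ^ 2 = ((d - c) / π) ^ 2 * (K ^ 2 * ∫ x in c..d, ‖f x‖ ^ 2) := by
        simp only [K]
        field_simp
    _ ≤ ((d - c) / π) ^ 2 * ∫ x in c..d, ‖f' x‖ ^ 2 := by gcongr

end InnerProductSpace

lemma monotoneOn_Iic_of_le_succ {α : Type*} [Preorder α] {f : ℕ → α} {N : ℕ}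
    (hf : ∀ n < N, f n ≤ f (n + 1)) : MonotoneOn f (Iic N) := by
  intro i _ j hj hij
  induction j, hij using Nat.le_induction with
  | base => rfl
  | succ j _ ih => exact (ih (mem_Iic.2 (by grind))).trans (hf j hj)

lemma Icc_subset_Icc_of_le_succ {α : Type*} [Preorder α] {t : ℕ → α} {N n : ℕ}
    (ht : ∀ n < N, t n ≤ t (n + 1)) (hn : n < N) : Icc (t n) (t (n + 1)) ⊆ Icc (t 0) (t N) := by
  have hmon := monotoneOn_Iic_of_le_succ ht
  exact Icc_subset_Icc (hmon (by simp) (by simp; omega) (by omega))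
    (hmon (by simp; omega) (by simp) hn)

lemma integral_le_const_mul_integral_of_partition {F G : ℝ → ℝ} {t : ℕ → ℝ} {N : ℕ} {C : ℝ}
    (ht : ∀ n < N, t n ≤ t (n + 1)) (hF : IntervalIntegrable F volume (t 0) (t N))
    (hG : IntervalIntegrable G volume (t 0) (t N))
    (h : ∀ n < N, ∫ x in t n..t (n + 1), F x ≤ C * ∫ x in t n..t (n + 1), G x) :
    ∫ x in t 0..t N, F x ≤ C * ∫ x in t 0..t N, G x := by
  have hpiece : ∀ n < N, uIcc (t n) (t (n + 1)) ⊆ uIcc (t 0) (t N) := fun n hn => by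
    rw [uIcc_of_le (ht n hn)]
    exact (Icc_subset_Icc_of_le_succ ht hn).trans Icc_subset_uIcc
  rw [← sum_integral_adjacent_intervals fun n hn => hF.mono_set (hpiece n hn),
    ← sum_integral_adjacent_intervals fun n hn => hG.mono_set (hpiece n hn), Finset.mul_sum]
  exact Finset.sum_le_sum fun n hn => h n (Finset.mem_range.1 hn)

theorem wirtinger_partition_general (a b δ : ℝ) (N : ℕ) (t : ℕ → ℝ)
    (ht0 : t 0 = a) (htN : t (N + 1) = b)
    (hmono : ∀ n ≤ N, t n ≤ t (n + 1))
    (hgap : ∀ n ≤ N, t (n + 1) - t n ≤ δ)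
    (f f' : ℝ → ℂ)
    (hderiv : ∀ x ∈ Set.Icc a b, HasDerivAt f (f' x) x)
    (hcont : ContinuousOn f' (Set.Icc a b))
    (hzero : ∀ n ≤ N + 1, f (t n) = 0) :
    ∫ x in a..b, ‖f x‖ ^ 2 ≤ (δ / Real.pi) ^ 2 * ∫ x in a..b, ‖f' x‖ ^ 2 := by
  subst ht0 htN
  have ht : ∀ n < N + 1, t n ≤ t (n + 1) := fun n hn => hmono n (by omega)
  have hab : t 0 ≤ t (N + 1) := monotoneOn_Iic_of_le_succ ht (by simp) (by simp) (by omega)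
  have hfc : ContinuousOn f (Icc (t 0) (t (N + 1))) := fun x hx =>
    (hderiv x hx).continuousAt.continuousWithinAt
  refine integral_le_const_mul_integral_of_partition ht
    (ContinuousOn.intervalIntegrable_of_Icc hab (by fun_prop))
    (ContinuousOn.intervalIntegrable_of_Icc hab (by fun_prop)) fun n hn => ?_
  have hsub := Icc_subset_Icc_of_le_succ ht hn
  calc ∫ x in t n..t (n + 1), ‖f x‖ ^ 2
      ≤ ((t (n + 1) - t n) / π) ^ 2 * ∫ x in t n..t (n + 1), ‖f' x‖ ^ 2 :=
        wirtinger_inequality (ht n hn) (fun x hx => hderiv x (hsub hx))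
          (hcont.mono hsub) (hzero n (by omega)) (hzero (n + 1) (by omega))
    _ ≤ (δ / π) ^ 2 * ∫ x in t n..t (n + 1), ‖f' x‖ ^ 2 := by
        gcongr
        · exact integral_nonneg (ht n hn) fun _ _ => by positivity
        · exact div_nonneg (sub_nonneg.2 (ht n hn)) pi_pos.le
        · exact hgap n (by omega)

/-- Wirtinger's inequality applied on each subinterval of a partition whose points are
zeros of `f`, with gaps at most `δ`. -/
theorem wirtinger_partition (a b δ : ℝ) (hδ : 0 < δ) (N : ℕ) (t : ℕ → ℝ)
    (ht0 : t 0 = a) (htN : t (N + 1) = b)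
    (hmono : ∀ n ≤ N, t n ≤ t (n + 1))
    (hgap : ∀ n ≤ N, t (n + 1) - t n ≤ δ)
    (f f' : ℝ → ℂ)
    (hderiv : ∀ x ∈ Set.Icc a b, HasDerivAt f (f' x) x)
    (hcont : ContinuousOn f' (Set.Icc a b))
    (hzero : ∀ n ≤ N + 1, f (t n) = 0) :
    ∫ x in a..b, ‖f x‖ ^ 2 ≤ (δ / Real.pi) ^ 2 * ∫ x in a..b, ‖f' x‖ ^ 2 :=
  wirtinger_partition_general a b δ N t ht0 htN hmono hgap f f' hderiv hcont hzero
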